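/- arXiv:math/0109159 — 6 statements merged into one kernel-verified Lean document; each statement's English description precedes it below -/
import Mathlib

section
/- Let (a_{n,i})_{(q_n)} be a dynamical subsequence of a dynamical sequence of integers (s_{n,i})_{(r_n)} with positive lower density D = liminf q_n/r_n > 0. If (s_{n,i})_{(r_n)} is weak mixing with respect to an ergodic measure-preserving transformation T, then (a_{n,i})_{(q_n)} is weak mixing with respect to T. -/
open MeasureTheory Filter Finset

/-- Integer iterate of an invertible transformation. -/
noncomputable def iterZ {X : Type*} [MeasurableSpace X] (T : X ≃ᵐ X) (k : ℤ) : X → X :=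
  if 0 ≤ k then (⇑T)^[k.toNat] else (⇑T.symm)^[(-k).toNat]

/-- Multiplicity function of a dynamical sequence: number of indices with value `ℓ`. -/
def multFn (r : ℕ → ℕ) (s : ℕ → ℕ → ℤ) (n : ℕ) (ℓ : ℤ) : ℕ :=
  ((Finset.range (r n)).filter (fun i => s n i = ℓ)).card

/-- If the multiplicity of each value among `(a i)_{i<q}` is at most its multiplicity among
`(s i)_{i<r}`, then for any nonnegative `f` the sum of `f` over the `a`-values is at most
the sum over the `s`-values. -/
lemma sum_le_of_mult_le (q r : ℕ) (a s : ℕ → ℤ)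
    (hsub : ∀ ℓ : ℤ, ((Finset.range q).filter (fun i => a i = ℓ)).card ≤
      ((Finset.range r).filter (fun i => s i = ℓ)).card)
    (f : ℤ → ℝ) (hf : ∀ ℓ, 0 ≤ f ℓ) :
    ∑ i ∈ Finset.range q, f (a i) ≤ ∑ i ∈ Finset.range r, f (s i) := by
  rw [Finset.sum_comp f a, Finset.sum_comp f s]
  calc ∑ b ∈ (Finset.range q).image a, ((Finset.range q).filter fun i => a i = b).card • f b
      ≤ ∑ b ∈ (Finset.range q).image a, ((Finset.range r).filter fun i => s i = b).card • f b := by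
        refine Finset.sum_le_sum fun b _ => ?_
        simp only [nsmul_eq_mul]
        exact mul_le_mul_of_nonneg_right (by exact_mod_cast hsub b) (hf b)
    _ ≤ ∑ b ∈ (Finset.range q).image a ∪ (Finset.range r).image s,
          ((Finset.range r).filter fun i => s i = b).card • f b := by
        refine Finset.sum_le_sum_of_subset_of_nonneg Finset.subset_union_left fun b _ _ => ?_
        simp only [nsmul_eq_mul]
        exact mul_nonneg (by positivity) (hf b)
    _ = ∑ b ∈ (Finset.range r).image s, ((Finset.range r).filter fun i => s i = b).card • f b := by
        refine (Finset.sum_subset Finset.subset_union_right fun b _ hb => ?_).symm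
        have : ((Finset.range r).filter fun i => s i = b).card = 0 := by
          rw [Finset.card_eq_zero, Finset.filter_eq_empty_iff]
          intro i hi hsi
          exact hb (Finset.mem_image.mpr ⟨i, hi, hsi⟩)
        simp [this]

/-- A dynamical subsequence of positive lower density of a dynamical sequence that is
weak mixing with respect to an ergodic transformation is itself weak mixing with respect to it. -/
theorem weak_mixing_dynseq_of_subseq_pos_density
    {X : Type*} [MeasurableSpace X] (μ : Measure X) [IsProbabilityMeasure μ]
    (T : X ≃ᵐ X) (hT : MeasurePreserving T μ μ) (hE : Ergodic (⇑T) μ)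
    (r q : ℕ → ℕ) (hrtop : Tendsto r atTop atTop) (hqtop : Tendsto q atTop atTop)
    (s a : ℕ → ℕ → ℤ)
    (hsub : ∀ n ℓ, multFn q a n ℓ ≤ multFn r s n ℓ)
    (hdens : 0 < Filter.liminf (fun n : ℕ => (q n : ℝ) / (r n : ℝ)) atTop)
    (hwm : ∀ A : ℕ → Set X, (∀ n, MeasurableSet (A n)) → ∀ B : Set X, MeasurableSet B →
      Tendsto (fun n : ℕ =>
          (1 / (r n : ℝ)) * ∑ i ∈ Finset.range (r n),
            |(μ (iterZ T (s n i) '' A n ∩ B)).toReal - (μ (A n)).toReal * (μ B).toReal|)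
        atTop (nhds 0)) :
    ∀ A : ℕ → Set X, (∀ n, MeasurableSet (A n)) → ∀ B : Set X, MeasurableSet B →
      Tendsto (fun n : ℕ =>
          (1 / (q n : ℝ)) * ∑ i ∈ Finset.range (q n),
            |(μ (iterZ T (a n i) '' A n ∩ B)).toReal - (μ (A n)).toReal * (μ B).toReal|)
        atTop (nhds 0) := by
  intro A hA B hB
  set D : ℝ := Filter.liminf (fun n : ℕ => (q n : ℝ) / (r n : ℝ)) atTop with hD
  -- the function of a value ℓ ∈ ℤ whose averages we consider
  set f : ℕ → ℤ → ℝ := fun n ℓ =>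
    |(μ (iterZ T ℓ '' A n ∩ B)).toReal - (μ (A n)).toReal * (μ B).toReal| with hf
  have hfnn : ∀ n ℓ, 0 ≤ f n ℓ := fun n ℓ => abs_nonneg _
  have hS : Tendsto (fun n : ℕ =>
      (2 / D) * ((1 / (r n : ℝ)) * ∑ i ∈ Finset.range (r n), f n (s n i)))
      atTop (nhds 0) := by
    have := (hwm A hA B hB).const_mul (2 / D)
    simpa using this
  -- eventually q n / r n > D / 2
  have hev : ∀ᶠ n in atTop, D / 2 < (q n : ℝ) / (r n : ℝ) := by
    refine Filter.eventually_lt_of_lt_liminf (by linarith) ?_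
    exact Filter.isBoundedUnder_of ⟨0, fun n => by positivity⟩
  have hq1 : ∀ᶠ n in atTop, 1 ≤ q n := hqtop.eventually_ge_atTop 1
  have hr1 : ∀ᶠ n in atTop, 1 ≤ r n := hrtop.eventually_ge_atTop 1
  refine squeeze_zero' ?_ ?_ hS
  · filter_upwards with n
    have : (0:ℝ) ≤ ∑ i ∈ Finset.range (q n), f n (a n i) :=
      Finset.sum_nonneg fun i _ => hfnn n _
    positivity
  · filter_upwards [hev, hq1, hr1] with n hqr hq hr
    have hq0 : (0:ℝ) < q n := by exact_mod_cast hq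
    have hr0 : (0:ℝ) < r n := by exact_mod_cast hr
    have hsum : ∑ i ∈ Finset.range (q n), f n (a n i) ≤
        ∑ i ∈ Finset.range (r n), f n (s n i) :=
      sum_le_of_mult_le (q n) (r n) (a n) (s n) (fun ℓ => hsub n ℓ) (f n) (hfnn n)
    have hSnn : (0:ℝ) ≤ ∑ i ∈ Finset.range (r n), f n (s n i) :=
      Finset.sum_nonneg fun i _ => hfnn n _
    have hDr : D * (r n : ℝ) < 2 * q n := by
      rw [div_lt_div_iff₀ (by norm_num) hr0] at hqr
      linarith
    have hcoef : (1 : ℝ) / q n ≤ 2 / D * (1 / (r n : ℝ)) := by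
      rw [div_mul_div_comm, mul_one, div_le_div_iff₀ hq0 (by positivity)]
      nlinarith
    calc (1 / (q n : ℝ)) * ∑ i ∈ Finset.range (q n), f n (a n i)
        ≤ (1 / (q n : ℝ)) * ∑ i ∈ Finset.range (r n), f n (s n i) :=
          mul_le_mul_of_nonneg_left hsum (by positivity)
      _ ≤ (2 / D * (1 / (r n : ℝ))) * ∑ i ∈ Finset.range (r n), f n (s n i) :=
          mul_le_mul_of_nonneg_right hcoef hSnn
      _ = (2 / D) * ((1 / (r n : ℝ)) * ∑ i ∈ Finset.range (r n), f n (s n i)) := by ring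
end

section
/- Let T be an ergodic measure-preserving invertible transformation of a probability space. If T is mixing, then every square monotone dynamical sequence of nonnegative integers is ergodic with respect to T: for every measurable B, ∫ |(1/r_n)∑_{i<r_n} χ_B∘T^{-s_{n,i}} − μ(B)|² dμ → 0. -/
/-!
Write `c = μ B`. The integral is the variance of the average of the indicators `χ_B ∘ T^{-s_{n,i}}`
of the sets `T^{s_{n,i}} B`, namely `r_n⁻² ∑_{i,j} (μ (T^{s_{n,i}} B ∩ T^{s_{n,j}} B) - c²)`, and by
invariance of `μ` each summand is the correlation `μ (T^d B ∩ B) - c²` at the lag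
`d = s_{n,i} - s_{n,j}`. Correlations are even in `d`, so mixing makes them smaller than `ε` once
`|d| ≥ M`; square monotonicity makes the pairs with `|d| < M` a vanishing proportion of all `r_n²`
pairs, and on those the correlations are bounded.
-/

open MeasureTheory Filter Finset

open ProbabilityTheory Topology

section iterZ

variable {X : Type*} [MeasurableSpace X] (T : X ≃ᵐ X)

lemma iterZ_eq_coe_zpow (k : ℤ) : iterZ T k = ⇑(T.toEquiv ^ k) := by
  unfold iterZ
  split_ifs with h
  · lift k to ℕ using h
    simp only [Int.toNat_natCast, zpow_natCast, Equiv.Perm.coe_pow, MeasurableEquiv.coe_toEquiv]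
  · obtain ⟨m, rfl⟩ : ∃ m : ℕ, k = -m := ⟨(-k).toNat, by omega⟩
    simp only [neg_neg, Int.toNat_natCast, zpow_neg, zpow_natCast, Equiv.Perm.inv_def]
    rfl

lemma preimage_iterZ_preimage_iterZ (a b : ℤ) (A : Set X) :
    iterZ T a ⁻¹' (iterZ T b ⁻¹' A) = iterZ T (b + a) ⁻¹' A := by
  simp only [iterZ_eq_coe_zpow, zpow_add, Equiv.Perm.coe_mul, Set.preimage_comp]

lemma image_iterZ (k : ℤ) (A : Set X) : iterZ T k '' A = iterZ T (-k) ⁻¹' A := by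
  rw [iterZ_eq_coe_zpow, iterZ_eq_coe_zpow, Equiv.image_eq_preimage_symm, zpow_neg]
  rfl

@[simp] lemma iterZ_zero : iterZ T 0 = id := by simp [iterZ]

variable {T}

lemma measurePreserving_iterZ {μ : Measure X} (hT : MeasurePreserving T μ μ) (k : ℤ) :
    MeasurePreserving (iterZ T k) μ μ := by
  unfold iterZ
  split_ifs
  · exact hT.iterate _
  · exact (hT.symm T).iterate _

end iterZ

lemma Function.Even.tendsto_cofinite_of_tendsto_natCast {α : Type*} [TopologicalSpace α]
    {f : ℤ → α} (hf : f.Even) {a : α} (h : Tendsto (fun n : ℕ => f n) atTop (𝓝 a)) :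
    Tendsto f cofinite (𝓝 a) := by
  have htop : Tendsto f atTop (𝓝 a) := by
    rwa [← Nat.map_cast_int_atTop, tendsto_map'_iff]
  have hbot : Tendsto f atBot (𝓝 a) := by
    simpa [Function.comp_def, hf _] using htop.comp tendsto_neg_atBot_atTop
  rw [Int.cofinite_eq]
  exact hbot.sup htop

lemma Int.exists_forall_abs_ge_of_eventually_cofinite {p : ℤ → Prop} (h : ∀ᶠ d in cofinite, p d) :
    ∃ M : ℕ, 0 < M ∧ ∀ d : ℤ, (M : ℤ) ≤ |d| → p d := by
  rw [Int.cofinite_eq, ← comap_abs_atTop, eventually_comap, eventually_atTop] at h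
  obtain ⟨M, hM⟩ := h
  exact ⟨M.toNat + 1, by omega, fun d hd => hM |d| (by omega) d rfl⟩

lemma Finset.abs_sum_le_mul_card_filter_add {α : Type*} {s : Finset α} {f : α → ℝ}
    (p : α → Prop) [DecidablePred p] {C ε : ℝ} (hε : 0 ≤ ε) (hC : ∀ a ∈ s, |f a| ≤ C)
    (hfar : ∀ a ∈ s, ¬ p a → |f a| ≤ ε) :
    |∑ a ∈ s, f a| ≤ C * #{a ∈ s | p a} + ε * #s := by
  have hnear : ∑ a ∈ s with p a, |f a| ≤ #{a ∈ s | p a} • C :=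
    sum_le_card_nsmul _ _ _ fun a ha => hC a (mem_filter.1 ha).1
  have hrest : ∑ a ∈ s with ¬ p a, |f a| ≤ #{a ∈ s | ¬ p a} • ε :=
    sum_le_card_nsmul _ _ _ fun a ha => hfar a (mem_filter.1 ha).1 (mem_filter.1 ha).2
  have hcard : (#{a ∈ s | ¬ p a} : ℝ) ≤ #s := by exact_mod_cast card_filter_le _ _
  rw [nsmul_eq_mul] at hnear hrest
  calc |∑ a ∈ s, f a| ≤ ∑ a ∈ s, |f a| := abs_sum_le_sum_abs _ _
    _ = ∑ a ∈ s with p a, |f a| + ∑ a ∈ s with ¬ p a, |f a| :=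
      (sum_filter_add_sum_filter_not _ _ _).symm
    _ ≤ C * #{a ∈ s | p a} + ε * #s := by nlinarith

def SquareMonotone (r : ℕ → ℕ) (s : ℕ → ℕ → ℤ) : Prop :=
  ∀ M : ℕ, 0 < M →
    Tendsto (fun n => (#{p ∈ range (r n) ×ˢ range (r n) | |s n p.1 - s n p.2| < M} : ℝ)
      / (r n : ℝ) ^ 2) atTop (𝓝 0)

lemma SquareMonotone.tendsto_sum_div_sq {r : ℕ → ℕ} {s : ℕ → ℕ → ℤ} (hrs : SquareMonotone r s)
    {g : ℤ → ℝ} (hg : Tendsto g cofinite (𝓝 0)) :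
    Tendsto (fun n => (∑ p ∈ range (r n) ×ˢ range (r n), g (s n p.1 - s n p.2)) / (r n : ℝ) ^ 2)
      atTop (𝓝 0) := by
  obtain ⟨C, hC⟩ : BddAbove (Set.range fun d => |g d|) := by
    simpa using hg.abs.bddAbove_range_of_cofinite
  rw [Metric.tendsto_nhds]
  intro ε hε
  obtain ⟨M, hM, hfar⟩ := Int.exists_forall_abs_ge_of_eventually_cofinite
    (hg.eventually (Metric.closedBall_mem_nhds 0 (half_pos hε)))
  have hnear := ((hrs M hM).const_mul C).eventually (gt_mem_nhds (by linarith : C * 0 < ε / 2))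
  filter_upwards [hnear] with n hn
  have hsum := abs_sum_le_mul_card_filter_add (s := range (r n) ×ˢ range (r n))
    (f := fun p => g (s n p.1 - s n p.2)) (fun p => |s n p.1 - s n p.2| < M)
    (half_pos hε).le (fun p _ => hC ⟨s n p.1 - s n p.2, rfl⟩)
    (fun p _ hp => by simpa using hfar _ (not_lt.1 hp))
  rw [card_product, card_range, Nat.cast_mul, ← sq] at hsum
  rcases eq_or_ne (r n) 0 with hr | hr
  · simpa [hr] using hε
  have hr2 : (0 : ℝ) < (r n : ℝ) ^ 2 := by positivity
  rw [Real.dist_eq, sub_zero, abs_div, abs_of_pos hr2, div_lt_iff₀ hr2]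
  rw [mul_div_assoc', div_lt_iff₀ hr2] at hn
  nlinarith

section indicator

variable {Ω : Type*} [MeasurableSpace Ω] {μ : Measure Ω} [IsProbabilityMeasure μ]

lemma memLp_indicator_one {S : Set Ω} (hS : MeasurableSet S) (p : ENNReal) :
    MemLp (S.indicator (1 : Ω → ℝ)) p μ :=
  (memLp_const 1).indicator hS

lemma ProbabilityTheory.covariance_indicator_one {S S' : Set Ω} (hS : MeasurableSet S)
    (hS' : MeasurableSet S') :
    cov[S.indicator 1, S'.indicator 1; μ] = μ.real (S ∩ S') - μ.real S * μ.real S' := by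
  rw [covariance_eq_sub (memLp_indicator_one hS 2) (memLp_indicator_one hS' 2),
    ← Set.inter_indicator_one, integral_indicator_one hS, integral_indicator_one hS',
    integral_indicator_one (hS.inter hS')]

lemma integral_sq_average_indicator_sub {ι : Type*} {t : Finset ι} (ht : t.Nonempty)
    {S : ι → Set Ω} (hS : ∀ i ∈ t, MeasurableSet (S i)) {c : ℝ}
    (hc : ∀ i ∈ t, μ.real (S i) = c) :
    ∫ ω, ((#t : ℝ)⁻¹ * ∑ i ∈ t, (S i).indicator 1 ω - c) ^ 2 ∂μ
      = (∑ p ∈ t ×ˢ t, (μ.real (S p.1 ∩ S p.2) - c ^ 2)) / (#t : ℝ) ^ 2 := by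
  have ht0 : (#t : ℝ) ≠ 0 := by exact_mod_cast ht.card_ne_zero
  have hmean : μ[fun ω => (#t : ℝ)⁻¹ * ∑ i ∈ t, (S i).indicator 1 ω] = c := by
    rw [integral_const_mul,
      integral_finsetSum _ fun i hi => (integrable_const 1).indicator (hS i hi),
      sum_congr rfl fun i hi => (integral_indicator_one (hS i hi)).trans (hc i hi), sum_const,
      nsmul_eq_mul, inv_mul_cancel_left₀ ht0]
  have hmeas : AEMeasurable (fun ω => (#t : ℝ)⁻¹ * ∑ i ∈ t, (S i).indicator 1 ω) μ :=
    ((measurable_sum t fun i hi => measurable_one.indicator (hS i hi)).const_mul _).aemeasurable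
  calc ∫ ω, ((#t : ℝ)⁻¹ * ∑ i ∈ t, (S i).indicator 1 ω - c) ^ 2 ∂μ
      = Var[fun ω => (#t : ℝ)⁻¹ * ∑ i ∈ t, (S i).indicator 1 ω; μ] := by
        rw [variance_eq_integral hmeas, hmean]
    _ = (#t : ℝ)⁻¹ ^ 2 * ∑ i ∈ t, ∑ j ∈ t, cov[(S i).indicator 1, (S j).indicator 1; μ] := by
        rw [variance_const_mul, variance_fun_sum' fun i hi => memLp_indicator_one (hS i hi) 2]
    _ = _ := by
        rw [sum_product, div_eq_inv_mul, inv_pow]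
        congr 1
        refine sum_congr rfl fun i hi => sum_congr rfl fun j hj => ?_
        rw [covariance_indicator_one (hS i hi) (hS j hj), hc i hi, hc j hj, sq]

end indicator

section correlation

variable {X : Type*} [MeasurableSpace X] {μ : Measure X} {T : X ≃ᵐ X} {B : Set X}

lemma measureReal_preimage_iterZ_inter (hT : MeasurePreserving T μ μ) (hB : MeasurableSet B)
    (a b : ℤ) :
    μ.real (iterZ T a ⁻¹' B ∩ iterZ T b ⁻¹' B) = μ.real (iterZ T (a - b) ⁻¹' B ∩ B) := by
  have hpre : iterZ T b ⁻¹' (iterZ T (a - b) ⁻¹' B ∩ B) = iterZ T a ⁻¹' B ∩ iterZ T b ⁻¹' B := by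
    rw [Set.preimage_inter, preimage_iterZ_preimage_iterZ, sub_add_cancel]
  rw [← hpre, measureReal_def, measureReal_def,
    (measurePreserving_iterZ hT b).measure_preimage
      (((measurePreserving_iterZ hT _).measurable hB).inter hB).nullMeasurableSet]

lemma even_measureReal_preimage_iterZ_neg_inter (hT : MeasurePreserving T μ μ)
    (hB : MeasurableSet B) : Function.Even fun d => μ.real (iterZ T (-d) ⁻¹' B ∩ B) := by
  intro d
  have h := measureReal_preimage_iterZ_inter hT hB 0 (-d)
  rw [zero_sub, neg_neg, iterZ_zero, Set.preimage_id, Set.inter_comm] at h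
  simpa only [neg_neg] using h.symm

lemma tendsto_measureReal_preimage_iterZ_neg_inter_cofinite (hT : MeasurePreserving T μ μ)
    (hB : MeasurableSet B)
    (hmix : Tendsto (fun n : ℕ => μ.real (iterZ T n '' B ∩ B)) atTop
      (𝓝 (μ.real B * μ.real B))) :
    Tendsto (fun d => μ.real (iterZ T (-d) ⁻¹' B ∩ B)) cofinite (𝓝 (μ.real B * μ.real B)) :=
  (even_measureReal_preimage_iterZ_neg_inter hT hB).tendsto_cofinite_of_tendsto_natCast
    (by simpa only [image_iterZ] using hmix)

lemma integral_sq_average_indicator_iterZ_sub {ι : Type*} [IsProbabilityMeasure μ]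
    (hT : MeasurePreserving T μ μ) (hB : MeasurableSet B) {t : Finset ι} (ht : t.Nonempty)
    (s : ι → ℤ) :
    ∫ x, ((#t : ℝ)⁻¹ * ∑ i ∈ t, B.indicator 1 (iterZ T (-s i) x) - μ.real B) ^ 2 ∂μ
      = (∑ p ∈ t ×ˢ t, (μ.real (iterZ T (-(s p.1 - s p.2)) ⁻¹' B ∩ B) - μ.real B ^ 2))
          / (#t : ℝ) ^ 2 := by
  have hS : ∀ i ∈ t, MeasurableSet (iterZ T (-s i) ⁻¹' B) :=
    fun i _ => (measurePreserving_iterZ hT _).measurable hB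
  have hc : ∀ i ∈ t, μ.real (iterZ T (-s i) ⁻¹' B) = μ.real B :=
    fun i _ => (measurePreserving_iterZ hT _).measureReal_preimage hB.nullMeasurableSet
  convert integral_sq_average_indicator_sub ht hS hc using 4 with x p
  · rfl
  · rw [measureReal_preimage_iterZ_inter hT hB, neg_sub_neg, neg_sub]

end correlation

theorem mixing_imp_square_monotone_ergodic_general
    {X : Type*} [MeasurableSpace X] (μ : Measure X) [IsProbabilityMeasure μ]
    (T : X ≃ᵐ X) (hT : MeasurePreserving T μ μ)
    (hmix : ∀ A B : Set X, MeasurableSet A → MeasurableSet B →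
      Tendsto (fun n : ℕ => (μ (iterZ T (n : ℤ) '' A ∩ B)).toReal)
        atTop (nhds ((μ A).toReal * (μ B).toReal)))
    (r : ℕ → ℕ) (hrtop : Tendsto r atTop atTop)
    (s : ℕ → ℕ → ℤ)
    (hsq : ∀ M : ℕ, 0 < M →
      Tendsto (fun n : ℕ =>
          (((Finset.range (r n) ×ˢ Finset.range (r n)).filter
              (fun p => |s n p.1 - s n p.2| < (M : ℤ))).card : ℝ) / (r n : ℝ) ^ 2)
        atTop (nhds 0)) :
    ∀ B : Set X, MeasurableSet B →
      Tendsto (fun n : ℕ =>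
          ∫ x, |(1 / (r n : ℝ)) * ∑ i ∈ Finset.range (r n),
              B.indicator (fun _ => (1 : ℝ)) (iterZ T (-(s n i)) x) - (μ B).toReal| ^ 2 ∂μ)
        atTop (nhds 0) := by
  intro B hB
  have hcorr := (tendsto_measureReal_preimage_iterZ_neg_inter_cofinite hT hB
    (hmix B B hB hB)).sub_const (μ.real B ^ 2)
  rw [← sq, sub_self] at hcorr
  refine (SquareMonotone.tendsto_sum_div_sq hsq hcorr).congr' ?_
  filter_upwards [hrtop.eventually_gt_atTop 0] with n hn
  have hvar := integral_sq_average_indicator_iterZ_sub hT hB (nonempty_range_iff.2 hn.ne') (s n)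
  rw [card_range] at hvar
  simp only [← hvar, sq_abs, one_div]
  rfl

/-- If an ergodic measure-preserving invertible transformation of a probability space is
mixing, then every square monotone dynamical sequence of nonnegative integers is ergodic
with respect to it (L² dynamical Cesàro averages of indicators converge). -/
theorem mixing_imp_square_monotone_ergodic
    {X : Type*} [MeasurableSpace X] (μ : Measure X) [IsProbabilityMeasure μ]
    (T : X ≃ᵐ X) (hT : MeasurePreserving T μ μ) (hE : Ergodic (⇑T) μ)
    (hmix : ∀ A B : Set X, MeasurableSet A → MeasurableSet B →
      Tendsto (fun n : ℕ => (μ (iterZ T (n : ℤ) '' A ∩ B)).toReal)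
        atTop (nhds ((μ A).toReal * (μ B).toReal)))
    (r : ℕ → ℕ) (hrtop : Tendsto r atTop atTop)
    (s : ℕ → ℕ → ℤ) (hnn : ∀ n i, i < r n → 0 ≤ s n i)
    (hsq : ∀ M : ℕ, 0 < M →
      Tendsto (fun n : ℕ =>
          (((Finset.range (r n) ×ˢ Finset.range (r n)).filter
              (fun p => |s n p.1 - s n p.2| < (M : ℤ))).card : ℝ) / (r n : ℝ) ^ 2)
        atTop (nhds 0)) :
    ∀ B : Set X, MeasurableSet B →
      Tendsto (fun n : ℕ =>
          ∫ x, |(1 / (r n : ℝ)) * ∑ i ∈ Finset.range (r n),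
              B.indicator (fun _ => (1 : ℝ)) (iterZ T (-(s n i)) x) - (μ B).toReal| ^ 2 ∂μ)
        atTop (nhds 0) :=
  mixing_imp_square_monotone_ergodic_general μ T hT hmix r hrtop s hsq
end

section
/- Let T be an ergodic measure-preserving invertible transformation of a probability space that is not mixing. Then there exists a square monotone dynamical sequence of integers that is not ergodic with respect to T. Consequently, T is mixing if and only if every square monotone dynamical sequence is ergodic with respect to T. -/
open MeasureTheory Filter Finset

/-- `T` is mixing: correlations of all pairs of measurable sets converge. -/
def IsMixingT {X : Type*} [MeasurableSpace X] (μ : MeasureTheory.Measure X) (T : X ≃ᵐ X) : Prop :=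
  ∀ A B : Set X, MeasurableSet A → MeasurableSet B →
    Tendsto (fun n : ℕ => (μ (iterZ T (n : ℤ) '' A ∩ B)).toReal)
      atTop (nhds ((μ A).toReal * (μ B).toReal))

/-- A dynamical sequence `(s, r)` (with `r → ∞`) is square monotone. -/
def SquareMonotoneSeq (r : ℕ → ℕ) (s : ℕ → ℕ → ℤ) : Prop :=
  Tendsto r atTop atTop ∧
  ∀ M : ℕ, 0 < M →
    Tendsto (fun n : ℕ =>
        (((Finset.range (r n) ×ˢ Finset.range (r n)).filter
            (fun p => |s n p.1 - s n p.2| < (M : ℤ))).card : ℝ) / (r n : ℝ) ^ 2)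
      atTop (nhds 0)

/-- A dynamical sequence is ergodic with respect to `T` (L² Cesàro averages of indicators). -/
def ErgodicDynSeqL2 {X : Type*} [MeasurableSpace X] (μ : MeasureTheory.Measure X) (T : X ≃ᵐ X)
    (r : ℕ → ℕ) (s : ℕ → ℕ → ℤ) : Prop :=
  ∀ B : Set X, MeasurableSet B →
    Tendsto (fun n : ℕ =>
        ∫ x, |(1 / (r n : ℝ)) * ∑ i ∈ Finset.range (r n),
            B.indicator (fun _ => (1 : ℝ)) (iterZ T (-(s n i)) x) - (μ B).toReal| ^ 2 ∂μ)
      atTop (nhds 0)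

/-! If `T` is not mixing, there are measurable `A`, `B`, an `ε > 0` and times `n₀ < n₁ < ⋯` along
which the correlations `μ (Tⁿ A ∩ B) - μ A * μ B` all have the same sign and size at least `ε`.
The sequence `s i = -nᵢ` is square monotone since `|nᵢ - nⱼ| ≥ |i - j|`. The covariance
of the ergodic average `(1/N) ∑_{i<N} 1_B ∘ T^{nᵢ}` with `1_A` is the average of those correlations,
so by Cauchy–Schwarz the variance of the ergodic average, which is the `L²` quantity required to
tend to `0`, stays at least `ε²`. -/

open ProbabilityTheory Topology

theorem iterZ_natCast {X : Type*} [MeasurableSpace X] (T : X ≃ᵐ X) (m : ℕ) :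
    iterZ T m = (⇑T)^[m] := by
  simp [iterZ]

theorem sq_covariance_le_variance_mul_variance {Ω : Type*} [MeasurableSpace Ω] {μ : Measure Ω}
    [IsFiniteMeasure μ] {X Y : Ω → ℝ} (hX : MemLp X 2 μ) (hY : MemLp Y 2 μ) :
    cov[X, Y; μ] ^ 2 ≤ Var[X; μ] * Var[Y; μ] := by
  have hquad : ∀ t : ℝ, 0 ≤ Var[Y; μ] * (t * t) + 2 * cov[X, Y; μ] * t + Var[X; μ] := fun t => by
    have := variance_nonneg (X + t • Y) μ
    rw [variance_add hX (hY.const_smul t), variance_smul, covariance_smul_right] at this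
    linarith
  have := discrim_le_zero hquad
  rw [discrim] at this
  linarith

theorem MeasurableEmbedding.iterate {X : Type*} [MeasurableSpace X] {f : X → X}
    (hf : MeasurableEmbedding f) : ∀ n, MeasurableEmbedding f^[n]
  | 0 => MeasurableEmbedding.id
  | n + 1 => (hf.iterate n).comp hf

section Correlation

variable {X : Type*} [MeasurableSpace X] {μ : Measure X} {f : X → X} {A B : Set X}

theorem memLp_indicator_one_s7 [IsFiniteMeasure μ] (hA : MeasurableSet A) (p : ENNReal) :
    MemLp (A.indicator (1 : X → ℝ)) p μ :=
  memLp_indicator_const p hA (1 : ℝ) (Or.inr (measure_ne_top μ A))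

theorem memLp_indicator_one_comp [IsFiniteMeasure μ] (hf : MeasurePreserving f μ μ)
    (hB : MeasurableSet B) (p : ENNReal) : MemLp (fun x => B.indicator (1 : X → ℝ) (f x)) p μ :=
  (memLp_indicator_one_s7 hB p).comp_measurePreserving hf

theorem covariance_indicator_comp_indicator [IsProbabilityMeasure μ] (hf : MeasurePreserving f μ μ)
    (hfe : MeasurableEmbedding f) (hA : MeasurableSet A) (hB : MeasurableSet B) :
    cov[fun x => B.indicator 1 (f x), A.indicator 1; μ]
      = μ.real (f '' A ∩ B) - μ.real A * μ.real B := by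
  have hprod : (fun x => B.indicator (1 : X → ℝ) (f x)) * A.indicator 1
      = fun x => (f '' A ∩ B).indicator 1 (f x) := by
    ext x
    rw [Set.inter_indicator_one, Pi.mul_apply, Pi.mul_apply,
      Set.indicator_image hfe.injective, mul_comm]
    rfl
  rw [covariance_eq_sub (memLp_indicator_one_comp hf hB 2) (memLp_indicator_one_s7 hA 2), hprod,
    hf.integral_comp hfe, hf.integral_comp hfe, integral_indicator_one hB,
    integral_indicator_one hA,
    integral_indicator_one ((hfe.measurableSet_image.mpr hA).inter hB), mul_comm]

theorem sq_average_correlation_le_integral [IsProbabilityMeasure μ] (hf : MeasurePreserving f μ μ)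
    (hfe : MeasurableEmbedding f) (hA : MeasurableSet A) (hB : MeasurableSet B) (φ : ℕ → ℕ)
    {N : ℕ} (hN : N ≠ 0) :
    ((1 / N : ℝ) * ∑ i ∈ range N, (μ.real (f^[φ i] '' A ∩ B) - μ.real A * μ.real B)) ^ 2 ≤
      ∫ x, |(1 / N : ℝ) * ∑ i ∈ range N, B.indicator 1 (f^[φ i] x) - μ.real B| ^ 2 ∂μ := by
  set S : X → ℝ := fun x => (1 / N : ℝ) * ∑ i ∈ range N, B.indicator 1 (f^[φ i] x)
  have hmemLp : ∀ i, MemLp (fun x => B.indicator (1 : X → ℝ) (f^[φ i] x)) 2 μ := fun i =>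
    memLp_indicator_one_comp (hf.iterate (φ i)) hB 2
  have hS : MemLp S 2 μ := (memLp_finsetSum _ fun i _ => hmemLp i).const_mul _
  have hmean : μ[S] = μ.real B := by
    rw [integral_const_mul, integral_finsetSum _ fun i _ => (hmemLp i).integrable one_le_two]
    simp only [(hf.iterate _).integral_comp (hfe.iterate _), integral_indicator_one hB,
      sum_const, card_range, nsmul_eq_mul]
    field_simp
  have hcov : cov[S, A.indicator 1; μ]
      = (1 / N : ℝ) * ∑ i ∈ range N, (μ.real (f^[φ i] '' A ∩ B) - μ.real A * μ.real B) := by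
    rw [covariance_const_mul_left,
      covariance_fun_sum_left' (fun i _ => hmemLp i) (memLp_indicator_one_s7 hA 2)]
    simp only [covariance_indicator_comp_indicator (hf.iterate _) (hfe.iterate _) hA hB]
  have hvarA : Var[A.indicator 1; μ] ≤ 1 := by
    refine (variance_le_sq_of_bounded (a := 0) (b := 1) (ae_of_all _ fun x => ?_)
      (measurable_one.indicator hA).aemeasurable).trans (by norm_num)
    by_cases hx : x ∈ A <;> simp [hx]
  calc _ = cov[S, A.indicator 1; μ] ^ 2 := by rw [hcov]
    _ ≤ Var[S; μ] * Var[A.indicator 1; μ] :=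
      sq_covariance_le_variance_mul_variance hS (memLp_indicator_one_s7 hA 2)
    _ ≤ Var[S; μ] := mul_le_of_le_one_right (variance_nonneg _ _) hvarA
    _ = _ := by
      rw [variance_eq_integral hS.aemeasurable, hmean]
      simp only [sq_abs, S]

end Correlation

theorem StrictMono.lt_add_of_abs_sub_lt {φ : ℕ → ℕ} (hφ : StrictMono φ) {i j M : ℕ}
    (h : |(φ i : ℤ) - φ j| < M) : i < j + M := by
  by_contra! hij
  obtain ⟨k, rfl⟩ := Nat.exists_eq_add_of_le hij
  have := hφ.add_le_nat (M + k) j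
  rw [show M + k + j = j + M + k by ring] at this
  rw [abs_lt] at h
  omega

theorem StrictMono.card_filter_abs_sub_lt_le {φ : ℕ → ℕ} (hφ : StrictMono φ) (N M : ℕ) :
    #{p ∈ range N ×ˢ range N | |(φ p.1 : ℤ) - φ p.2| < M} ≤ N * (2 * M) := by
  have hclose : ∀ p ∈ {p ∈ range N ×ˢ range N | |(φ p.1 : ℤ) - φ p.2| < M},
      p.1 < N ∧ p.2 < N ∧ p.1 < p.2 + M ∧ p.2 < p.1 + M := by
    intro p hp
    simp only [mem_filter, mem_product, mem_range] at hp
    exact ⟨hp.1.1, hp.1.2, hφ.lt_add_of_abs_sub_lt hp.2,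
      hφ.lt_add_of_abs_sub_lt (abs_sub_comm (φ p.1 : ℤ) _ ▸ hp.2)⟩
  -- each `i` has fewer than `2 * M` partners `j` with `|i - j| < M`
  simpa using card_le_card_of_injOn (fun p : ℕ × ℕ => (p.1, p.2 + M - p.1))
    (t := range N ×ˢ range (2 * M))
    (fun p hp => by
      have := hclose p hp
      simp only [coe_product, coe_range, Set.mem_prod, Set.mem_Iio]
      omega)
    (fun p hp q hq hpq => by
      have := hclose p hp; have := hclose q hq
      simp only [Prod.mk.injEq] at hpq
      ext <;> omega)

theorem squareMonotoneSeq_neg_of_strictMono {φ : ℕ → ℕ} (hφ : StrictMono φ) :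
    SquareMonotoneSeq (· + 1) (fun _ i => -(φ i : ℤ)) := by
  refine ⟨tendsto_add_atTop_nat 1, fun M _ => ?_⟩
  simp only [← neg_sub', abs_neg]
  have hbound : ∀ n : ℕ, (#{p ∈ range (n + 1) ×ˢ range (n + 1) | |(φ p.1 : ℤ) - φ p.2| < M} : ℝ)
      / ((n + 1 : ℕ) : ℝ) ^ 2 ≤ 2 * M / ((n + 1 : ℕ) : ℝ) := by
    intro n
    have hcard : (#{p ∈ range (n + 1) ×ˢ range (n + 1) | |(φ p.1 : ℤ) - φ p.2| < M} : ℝ)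
        ≤ ((n + 1 : ℕ) : ℝ) * (2 * M) := by
      exact_mod_cast hφ.card_filter_abs_sub_lt_le (n + 1) M
    calc _ ≤ ((n + 1 : ℕ) : ℝ) * (2 * M) / ((n + 1 : ℕ) : ℝ) ^ 2 := by gcongr
      _ = 2 * M / ((n + 1 : ℕ) : ℝ) := by field_simp
  exact squeeze_zero (fun n => by positivity) hbound
    ((tendsto_const_div_atTop_nhds_zero_nat _).comp (tendsto_add_atTop_nat 1))

theorem exists_strictMono_le_abs_average_of_not_tendsto_zero {u : ℕ → ℝ}
    (hu : ¬ Tendsto u atTop (𝓝 0)) :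
    ∃ ε > 0, ∃ φ : ℕ → ℕ, StrictMono φ ∧
      ∀ N : ℕ, N ≠ 0 → ε ≤ |(1 / N : ℝ) * ∑ i ∈ range N, u (φ i)| := by
  obtain ⟨ε, hε, hfreq⟩ : ∃ ε > 0, ∃ᶠ n in atTop, ε ≤ |u n| := by
    simpa only [Metric.tendsto_nhds, Real.dist_eq, sub_zero, not_forall, not_eventually, not_lt,
      exists_prop] using hu
  have le_average : ∀ v : ℕ → ℝ, (∀ i, ε ≤ v i) → ∀ N : ℕ, N ≠ 0 →
      ε ≤ (1 / N : ℝ) * ∑ i ∈ range N, v i := by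
    intro v hv N hN
    have := card_nsmul_le_sum (range N) v ε fun i _ => hv i
    rw [card_range, nsmul_eq_mul] at this
    rw [one_div, le_inv_mul_iff₀ (Nat.cast_pos.mpr (Nat.pos_of_ne_zero hN))]
    exact this
  rcases frequently_or_distrib.mp (hfreq.mono fun n => le_abs.mp) with hpos | hneg
  · obtain ⟨φ, hφ, hφu⟩ := extraction_of_frequently_atTop hpos
    exact ⟨ε, hε, φ, hφ, fun N hN => (le_average _ hφu N hN).trans (le_abs_self _)⟩
  · obtain ⟨φ, hφ, hφu⟩ := extraction_of_frequently_atTop hneg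
    refine ⟨ε, hε, φ, hφ, fun N hN => (le_average _ hφu N hN).trans ?_⟩
    rw [sum_neg_distrib, mul_neg]
    exact neg_le_abs _

theorem not_mixing_imp_exists_square_monotone_not_ergodic_general
    {X : Type*} [MeasurableSpace X] (μ : Measure X) [IsProbabilityMeasure μ]
    (T : X ≃ᵐ X) (hT : MeasurePreserving T μ μ)
    (hnotmix : ¬ IsMixingT μ T) :
    (∃ r : ℕ → ℕ, ∃ s : ℕ → ℕ → ℤ,
        SquareMonotoneSeq r s ∧ ¬ ErgodicDynSeqL2 μ T r s) ∧
    (IsMixingT μ T ↔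
      ∀ r : ℕ → ℕ, ∀ s : ℕ → ℕ → ℤ, SquareMonotoneSeq r s → ErgodicDynSeqL2 μ T r s) := by
  have hexists : ∃ r s, SquareMonotoneSeq r s ∧ ¬ ErgodicDynSeqL2 μ T r s := by
    obtain ⟨A, B, hA, hB, hcorr⟩ : ∃ A B, MeasurableSet A ∧ MeasurableSet B ∧
        ¬ Tendsto (fun n => μ.real ((⇑T)^[n] '' A ∩ B) - μ.real A * μ.real B) atTop (𝓝 0) := by
      simpa [IsMixingT, iterZ_natCast, tendsto_sub_nhds_zero_iff, measureReal_def] using hnotmix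
    obtain ⟨ε, hε, φ, hφ, hε_le⟩ := exists_strictMono_le_abs_average_of_not_tendsto_zero hcorr
    refine ⟨(· + 1), fun _ i => -(φ i : ℤ), squareMonotoneSeq_neg_of_strictMono hφ,
      fun hergodic => ?_⟩
    have hlim := hergodic B hB
    simp only [neg_neg, iterZ_natCast] at hlim
    have hsq_le : ε ^ 2 ≤ 0 := ge_of_tendsto' hlim fun n =>
      (pow_le_pow_left₀ hε.le (hε_le (n + 1) n.succ_ne_zero) 2).trans <| (sq_abs _).trans_le <|
        sq_average_correlation_le_integral hT T.measurableEmbedding hA hB φ n.succ_ne_zero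
    exact (pow_pos hε 2).not_ge hsq_le
  obtain ⟨r, s, hsq, hnot⟩ := hexists
  exact ⟨⟨r, s, hsq, hnot⟩, iff_of_false hnotmix fun hall => hnot (hall r s hsq)⟩

/-- If an ergodic transformation of a probability space is not mixing, then some square
monotone dynamical sequence is not ergodic with respect to it; consequently `T` is mixing
if and only if every square monotone dynamical sequence is ergodic with respect to `T`. -/
theorem not_mixing_imp_exists_square_monotone_not_ergodic
    {X : Type*} [MeasurableSpace X] (μ : Measure X) [IsProbabilityMeasure μ]
    (T : X ≃ᵐ X) (hT : MeasurePreserving T μ μ) (hE : Ergodic (⇑T) μ)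
    (hnotmix : ¬ IsMixingT μ T) :
    (∃ r : ℕ → ℕ, ∃ s : ℕ → ℕ → ℤ,
        SquareMonotoneSeq r s ∧ ¬ ErgodicDynSeqL2 μ T r s) ∧
    (IsMixingT μ T ↔
      ∀ r : ℕ → ℕ, ∀ s : ℕ → ℕ → ℤ, SquareMonotoneSeq r s → ErgodicDynSeqL2 μ T r s) :=
  not_mixing_imp_exists_square_monotone_not_ergodic_general μ T hT hnotmix
end

section
/- Let T be a mixing measure-preserving invertible transformation of a probability space. Then every weak monotone dynamical sequence of integers is weak ergodic with respect to T: for all measurable sets A and B, (1/r_n)∑_{i<r_n} μ(T^{s_{n,i}}(A) ∩ B) → μ(A)μ(B). -/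
open MeasureTheory Filter Finset

/-!
Mixing applied to `(A, B)` and, through the invariance of `μ`, to `(B, A)` shows that
`μ (T^k A ∩ B) → μ A * μ B` as `|k| → ∞` in both directions, i.e. along the cofinite filter on `ℤ`.
For a weak monotone sequence, all but a vanishing proportion of the `s n i` satisfy `|s n i| ≥ M`,
where the terms are `ε`-close to the limit; the other terms are bounded, so their share of the
average vanishes.
-/

def IsWeakMonotone (r : ℕ → ℕ) (s : ℕ → ℕ → ℤ) : Prop :=
  ∀ M : ℕ, 0 < M →
    Tendsto (fun n => (#{i ∈ range (r n) | |s n i| < (M : ℤ)} : ℝ) / r n) atTop (nhds 0)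

theorem Int.exists_forall_le_abs_of_eventually_cofinite {p : ℤ → Prop}
    (h : ∀ᶠ k in cofinite, p k) : ∃ M : ℕ, 0 < M ∧ ∀ k : ℤ, (M : ℤ) ≤ |k| → p k := by
  rw [Int.cofinite_eq, eventually_sup, eventually_atBot, eventually_atTop] at h
  obtain ⟨⟨a, ha⟩, ⟨b, hb⟩⟩ := h
  refine ⟨max a.natAbs b.natAbs + 1, Nat.succ_pos _, fun k hk => ?_⟩
  rcases abs_cases k with ⟨hk', -⟩ | ⟨hk', -⟩
  · exact hb k (by omega)
  · exact ha k (by omega)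

theorem abs_average_sub_le {f : ℤ → ℝ} {c C ε : ℝ} {M R : ℕ} (t : ℕ → ℤ) (hR : 0 < R)
    (hC : ∀ k, |f k - c| ≤ C) (hε : ∀ k, (M : ℤ) ≤ |k| → |f k - c| ≤ ε) (hε₀ : 0 ≤ ε) :
    |1 / (R : ℝ) * ∑ i ∈ range R, f (t i) - c| ≤
      ε + C * ((#{i ∈ range R | |t i| < (M : ℤ)} : ℝ) / R) := by
  have hpoint : ∀ k, |f k - c| ≤ ε + C * (if |k| < (M : ℤ) then 1 else 0) := by
    intro k
    split_ifs with hk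
    · linarith [hC k]
    · simpa using hε k (not_lt.1 hk)
  have hsum : ∑ i ∈ range R, (ε + C * (if |t i| < (M : ℤ) then 1 else 0)) =
      R * ε + C * #{i ∈ range R | |t i| < (M : ℤ)} := by
    rw [sum_add_distrib, sum_const, card_range, nsmul_eq_mul, ← mul_sum, sum_boole]
  have hcenter : 1 / (R : ℝ) * ∑ i ∈ range R, (f (t i) - c) =
      1 / (R : ℝ) * ∑ i ∈ range R, f (t i) - c := by
    rw [sum_sub_distrib, sum_const, card_range, nsmul_eq_mul]
    field_simp
  calc |1 / (R : ℝ) * ∑ i ∈ range R, f (t i) - c|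
      = 1 / R * |∑ i ∈ range R, (f (t i) - c)| := by
        rw [← hcenter, abs_mul, abs_of_pos (by positivity)]
    _ ≤ 1 / R * ∑ i ∈ range R, (ε + C * (if |t i| < (M : ℤ) then 1 else 0)) := by
        gcongr
        exact (abs_sum_le_sum_abs _ _).trans (sum_le_sum fun i _ => hpoint (t i))
    _ = ε + C * ((#{i ∈ range R | |t i| < (M : ℤ)} : ℝ) / R) := by
        rw [hsum]; field_simp

theorem tendsto_average_of_isWeakMonotone {f : ℤ → ℝ} {c C : ℝ} {r : ℕ → ℕ}
    {s : ℕ → ℕ → ℤ} (hf : Tendsto f cofinite (nhds c)) (hC : ∀ k, |f k - c| ≤ C)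
    (hr : Tendsto r atTop atTop) (hs : IsWeakMonotone r s) :
    Tendsto (fun n => 1 / (r n : ℝ) * ∑ i ∈ range (r n), f (s n i)) atTop (nhds c) := by
  rw [Metric.tendsto_nhds]
  intro ε hε
  obtain ⟨M, hM, hfM⟩ := Int.exists_forall_le_abs_of_eventually_cofinite
    (hf.eventually (Metric.closedBall_mem_nhds c (half_pos hε)))
  have hsmall : ∀ᶠ n in atTop,
      C * ((#{i ∈ range (r n) | |s n i| < (M : ℤ)} : ℝ) / r n) < ε / 2 :=
    ((hs M hM).const_mul C).eventually_lt_const (by simpa using half_pos hε)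
  filter_upwards [hr.eventually_gt_atTop 0, hsmall] with n hn hsmalln
  rw [Real.dist_eq]
  refine (abs_average_sub_le (M := M) (s n) hn hC (fun k hk => ?_) (half_pos hε).le).trans_lt
    (by linarith)
  simpa [Real.dist_eq] using hfM k hk

theorem MeasureTheory.MeasurePreserving.measure_image_inter_comm {X : Type*} [MeasurableSpace X]
    {μ : Measure X} {f g : X → X} (hf : MeasurePreserving f μ μ) (hg : Measurable g)
    (hgf : Function.LeftInverse g f) (hfg : Function.RightInverse g f) {A B : Set X}
    (hA : MeasurableSet A) (hB : MeasurableSet B) :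
    μ (g '' A ∩ B) = μ (f '' B ∩ A) := by
  have hpre : g '' A ∩ B = f ⁻¹' (A ∩ f '' B) := by
    rw [Set.image_eq_preimage_of_inverse hfg hgf, Set.preimage_inter,
      Set.preimage_image_eq B hgf.injective]
  have hmeas : MeasurableSet (A ∩ f '' B) := by
    rw [Set.image_eq_preimage_of_inverse hgf hfg]
    exact hA.inter (hg hB)
  rw [hpre, hf.measure_preimage hmeas.nullMeasurableSet, Set.inter_comm]

section IterZ

variable {X : Type*} [MeasurableSpace X] (T : X ≃ᵐ X)

theorem iterZ_of_nonneg {k : ℤ} (hk : 0 ≤ k) : iterZ T k = (⇑T)^[k.toNat] := if_pos hk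

theorem iterZ_of_nonpos {k : ℤ} (hk : k ≤ 0) : iterZ T k = (⇑T.symm)^[(-k).toNat] := by
  rcases hk.lt_or_eq with hk | rfl
  · exact if_neg hk.not_ge
  · simp [iterZ]

theorem tendsto_measure_iterZ_image_inter_cofinite {μ : Measure X}
    (hT : MeasurePreserving T μ μ)
    (hmix : ∀ A B : Set X, MeasurableSet A → MeasurableSet B →
      Tendsto (fun n : ℕ => (μ (iterZ T (n : ℤ) '' A ∩ B)).toReal)
        atTop (nhds ((μ A).toReal * (μ B).toReal)))
    {A B : Set X} (hA : MeasurableSet A) (hB : MeasurableSet B) :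
    Tendsto (fun k : ℤ => (μ (iterZ T k '' A ∩ B)).toReal) cofinite
      (nhds ((μ A).toReal * (μ B).toReal)) := by
  rw [Int.cofinite_eq, tendsto_sup]
  have htoNat : Tendsto Int.toNat atTop atTop :=
    tendsto_atTop_atTop.2 fun b => ⟨b, fun a ha => by omega⟩
  constructor
  · have hneg : Tendsto (fun k : ℤ => (-k).toNat) atBot atTop :=
      htoNat.comp tendsto_neg_atBot_atTop
    have h := (hmix B A hB hA).comp hneg
    rw [mul_comm] at h
    refine h.congr' ?_
    filter_upwards [eventually_le_atBot 0] with k hk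
    rw [Function.comp_apply, iterZ_of_nonpos T hk, iterZ_of_nonneg T (by omega), Int.toNat_natCast,
      (hT.iterate _).measure_image_inter_comm (T.symm.measurable.iterate _)
        (T.left_inv.iterate _) (T.right_inv.iterate _) hA hB]
  · refine ((hmix A B hA hB).comp htoNat).congr' ?_
    filter_upwards [eventually_ge_atTop 0] with k hk
    rw [Function.comp_apply, Int.toNat_of_nonneg hk]

end IterZ

/-- For a mixing measure-preserving invertible transformation of a probability space, every
weak monotone dynamical sequence of integers is weak ergodic with respect to it. -/
theorem mixing_imp_weak_monotone_weak_ergodic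
    {X : Type*} [MeasurableSpace X] (μ : Measure X) [IsProbabilityMeasure μ]
    (T : X ≃ᵐ X) (hT : MeasurePreserving T μ μ)
    (hmix : ∀ A B : Set X, MeasurableSet A → MeasurableSet B →
      Tendsto (fun n : ℕ => (μ (iterZ T (n : ℤ) '' A ∩ B)).toReal)
        atTop (nhds ((μ A).toReal * (μ B).toReal)))
    (r : ℕ → ℕ) (hrtop : Tendsto r atTop atTop)
    (s : ℕ → ℕ → ℤ)
    (hwk : ∀ M : ℕ, 0 < M →
      Tendsto (fun n : ℕ =>
          (((Finset.range (r n)).filter (fun i => |s n i| < (M : ℤ))).card : ℝ) / (r n : ℝ))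
        atTop (nhds 0)) :
    ∀ A B : Set X, MeasurableSet A → MeasurableSet B →
      Tendsto (fun n : ℕ =>
          (1 / (r n : ℝ)) * ∑ i ∈ Finset.range (r n), (μ (iterZ T (s n i) '' A ∩ B)).toReal)
        atTop (nhds ((μ A).toReal * (μ B).toReal)) := by
  intro A B hA hB
  have hbound : ∀ k, |(μ (iterZ T k '' A ∩ B)).toReal - (μ A).toReal * (μ B).toReal| ≤ 1 :=
    fun k => abs_sub_le_of_nonneg_of_le ENNReal.toReal_nonneg measureReal_le_one (by positivity)
      (mul_le_one₀ measureReal_le_one ENNReal.toReal_nonneg measureReal_le_one)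
  have h := tendsto_average_of_isWeakMonotone
    (tendsto_measure_iterZ_image_inter_cofinite T hT hmix hA hB) hbound hrtop hwk
  beta_reduce at h
  exact h
end

section
/- (Block Lemma) Let T be a measure-preserving transformation of a probability space and B a measurable set. Then for any positive integers R, L and p, ∫ |(1/R)∑_{i=0}^{R−1} χ_B∘T^{-i} − μ(B)| dμ ≤ ∫ |(1/L)∑_{i=0}^{L−1} χ_B∘T^{-ip} − μ(B)| dμ + pL/R. -/
open MeasureTheory Finset

/-!
Write `S = T⁻¹`, `f = χ_B` and `D` for the average of `f ∘ S^{ip}` over `i < L`. Averaging `D`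
once more along `S` for `R` steps gives the average over `i < L` of the `R`-averages of `f`
started at `S^{ip} x`; each of these differs from the `R`-average at `x` by at most `pL/R`,
since shifting an `R`-sum of a `[0,1]`-valued function by `m` steps changes it by at most `m`.
It remains to compare the `R`-average of `D - μ(B)` with `D - μ(B)` itself, and `S` preserves
`μ`, so ergodic averages do not increase the `L¹` norm.
-/

section Pointwise

variable {α : Type*} {f f' : α → α}

theorem Function.Commute.birkhoffAverage_birkhoffAverage (h : Function.Commute f f')
    (g : α → ℝ) (m n : ℕ) (x : α) :
    birkhoffAverage ℝ f (birkhoffAverage ℝ f' g m) n x =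
      birkhoffAverage ℝ f' (birkhoffAverage ℝ f g n) m x := by
  simp only [birkhoffAverage, birkhoffSum, smul_eq_mul, mul_sum]
  rw [sum_comm]
  refine sum_congr rfl fun i _ => sum_congr rfl fun j _ => ?_
  rw [(h.iterate_iterate j i).eq]
  ring

theorem abs_birkhoffSum_iterate_apply_sub_le {g : α → ℝ} {C : ℝ}
    (hg : ∀ y z, |g y - g z| ≤ C) (n m : ℕ) (x : α) :
    |birkhoffSum f g n (f^[m] x) - birkhoffSum f g n x| ≤ m * C := by
  induction m with
  | zero => simp
  | succ m ih =>
    have hstep := birkhoffSum_apply_sub_birkhoffSum f g n (f^[m] x)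
    rw [Function.iterate_succ_apply']
    calc _ ≤ |birkhoffSum f g n (f (f^[m] x)) - birkhoffSum f g n (f^[m] x)|
          + |birkhoffSum f g n (f^[m] x) - birkhoffSum f g n x| := abs_sub_le _ _ _
      _ ≤ C + m * C := by rw [hstep]; gcongr; exact hg _ _
      _ = (m + 1 : ℕ) * C := by push_cast; ring

theorem abs_birkhoffAverage_sub_le_of_forall_abs_sub_le {h : α → ℝ} {x : α} {ε : ℝ} {L : ℕ}
    (hL : 0 < L) (hε : ∀ i < L, |h (f^[i] x) - h x| ≤ ε) :
    |birkhoffAverage ℝ f h L x - h x| ≤ ε := by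
  have hL' : (L : ℝ) ≠ 0 := by positivity
  have hdiff :
      birkhoffAverage ℝ f h L x - h x = (L : ℝ)⁻¹ * ∑ i ∈ range L, (h (f^[i] x) - h x) := by
    rw [sum_sub_distrib, sum_const, card_range, nsmul_eq_mul, mul_sub, inv_mul_cancel_left₀ hL']
    rfl
  rw [hdiff, abs_mul, abs_inv, Nat.abs_cast, inv_mul_le_iff₀ (by positivity)]
  calc _ ≤ ∑ i ∈ range L, |h (f^[i] x) - h x| := abs_sum_le_sum_abs _ _
    _ ≤ ∑ i ∈ range L, ε := sum_le_sum fun i hi => hε i (mem_range.mp hi)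
    _ = L * ε := by rw [sum_const, card_range, nsmul_eq_mul]

theorem abs_birkhoffAverage_birkhoffAverage_iterate_sub_le {g : α → ℝ} {C : ℝ}
    (hg : ∀ y z, |g y - g z| ≤ C) (R : ℕ) {L : ℕ} (hL : 0 < L) (p : ℕ) (x : α) :
    |birkhoffAverage ℝ f (birkhoffAverage ℝ f^[p] g L) R x - birkhoffAverage ℝ f g R x|
      ≤ p * L * C / R := by
  have hC : 0 ≤ C := (abs_nonneg _).trans (hg x x)
  rw [(Function.Commute.self_iterate f p).birkhoffAverage_birkhoffAverage]
  refine abs_birkhoffAverage_sub_le_of_forall_abs_sub_le hL fun i hi => ?_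
  rw [← Function.iterate_mul, ← Real.dist_eq, dist_birkhoffAverage_birkhoffAverage, Real.dist_eq]
  gcongr
  calc _ ≤ ((p * i : ℕ) : ℝ) * C := abs_birkhoffSum_iterate_apply_sub_le hg R _ x
    _ ≤ p * L * C := by push_cast; gcongr

end Pointwise

section Integral

variable {X : Type*} [MeasurableSpace X] {μ : Measure X} {S : X → X}

theorem MeasureTheory.Integrable.birkhoffAverage {ψ : X → ℝ} (hψ : Integrable ψ μ)
    (hS : MeasurePreserving S μ μ) (n : ℕ) : Integrable (birkhoffAverage ℝ S ψ n) μ := by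
  unfold _root_.birkhoffAverage birkhoffSum
  exact (integrable_finsetSum _ fun k _ =>
    (hS.iterate k).integrable_comp_of_integrable hψ).smul (n : ℝ)⁻¹

theorem integral_abs_birkhoffAverage_le {ψ : X → ℝ} (hψ : Integrable ψ μ)
    (hS : MeasurePreserving S μ μ) (n : ℕ) :
    ∫ x, |birkhoffAverage ℝ S ψ n x| ∂μ ≤ ∫ x, |ψ x| ∂μ := by
  have hint : ∀ k, Integrable (fun x => |ψ (S^[k] x)|) μ := fun k =>
    ((hS.iterate k).integrable_comp_of_integrable hψ).abs
  have hinv : ∀ k, ∫ x, |ψ (S^[k] x)| ∂μ = ∫ x, |ψ x| ∂μ := fun k => by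
    have h := integral_map (hS.iterate k).aemeasurable (f := fun y => |ψ y|)
      (by rw [(hS.iterate k).map_eq]; exact hψ.abs.aestronglyMeasurable)
    rwa [(hS.iterate k).map_eq, eq_comm] at h
  calc ∫ x, |birkhoffAverage ℝ S ψ n x| ∂μ
      ≤ ∫ x, (n : ℝ)⁻¹ * ∑ k ∈ range n, |ψ (S^[k] x)| ∂μ := by
        refine integral_mono_of_nonneg (.of_forall fun _ => abs_nonneg _)
          ((integrable_finsetSum _ fun k _ => hint k).const_mul _) (.of_forall fun x => ?_)
        simp only [birkhoffAverage, birkhoffSum, smul_eq_mul]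
        rw [abs_mul, abs_inv, Nat.abs_cast]
        gcongr
        exact abs_sum_le_sum_abs _ _
    _ = (n : ℝ)⁻¹ * (n * ∫ x, |ψ x| ∂μ) := by
        rw [integral_const_mul, integral_finsetSum _ fun k _ => hint k]
        simp only [hinv, sum_const, card_range, nsmul_eq_mul]
    _ ≤ ∫ x, |ψ x| ∂μ := by
        rw [← mul_assoc]
        exact mul_le_of_le_one_left (integral_nonneg fun _ => abs_nonneg _)
          (inv_mul_le_one_of_le₀ le_rfl n.cast_nonneg)

theorem integral_abs_birkhoffAverage_sub_le [IsProbabilityMeasure μ]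
    (hS : MeasurePreserving S μ μ) {g : X → ℝ} (hgi : Integrable g μ) {C : ℝ}
    (hg : ∀ y z, |g y - g z| ≤ C) (c : ℝ) {R L : ℕ} (hR : 0 < R) (hL : 0 < L) (p : ℕ) :
    ∫ x, |birkhoffAverage ℝ S g R x - c| ∂μ ≤
      ∫ x, |birkhoffAverage ℝ S^[p] g L x - c| ∂μ + p * L * C / R := by
  set D := birkhoffAverage ℝ S^[p] g L
  have hDc : Integrable (D - fun _ => c) μ :=
    (hgi.birkhoffAverage (hS.iterate p) L).sub (integrable_const c)
  have hc : birkhoffAverage ℝ S (fun _ => c) R = fun _ => c :=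
    birkhoffAverage_of_comp_eq ℝ rfl (by positivity)
  calc ∫ x, |birkhoffAverage ℝ S g R x - c| ∂μ
      ≤ ∫ x, (|birkhoffAverage ℝ S (D - fun _ => c) R x| + p * L * C / R) ∂μ := by
        refine integral_mono_of_nonneg (.of_forall fun _ => abs_nonneg _)
          ((hDc.birkhoffAverage hS R).abs.add (integrable_const _)) (.of_forall fun x => ?_)
        have hclose := abs_birkhoffAverage_birkhoffAverage_iterate_sub_le (f := S) hg R hL p x
        dsimp only
        rw [birkhoffAverage_sub, Pi.sub_apply, Pi.sub_apply, hc]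
        linarith [abs_sub_le (birkhoffAverage ℝ S g R x) (birkhoffAverage ℝ S D R x) c,
          abs_sub_comm (birkhoffAverage ℝ S g R x) (birkhoffAverage ℝ S D R x)]
    _ = ∫ x, |birkhoffAverage ℝ S (D - fun _ => c) R x| ∂μ + p * L * C / R := by
        rw [integral_add (hDc.birkhoffAverage hS R).abs (integrable_const _), integral_const,
          probReal_univ, one_smul]
    _ ≤ ∫ x, |D x - c| ∂μ + p * L * C / R :=
        add_le_add_left (integral_abs_birkhoffAverage_le hDc hS R) _

end Integral

theorem block_lemma_general
    {X : Type*} [MeasurableSpace X] (μ : Measure X) [IsProbabilityMeasure μ]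
    (T : X ≃ᵐ X) (hT : MeasurePreserving T μ μ)
    (B : Set X) (hB : MeasurableSet B)
    (R L p : ℕ) (hR : 0 < R) (hL : 0 < L) :
    (∫ x, |(1 / (R : ℝ)) * ∑ i ∈ Finset.range R,
        B.indicator (fun _ => (1 : ℝ)) ((⇑T.symm)^[i] x) - (μ B).toReal| ∂μ) ≤
    (∫ x, |(1 / (L : ℝ)) * ∑ i ∈ Finset.range L,
        B.indicator (fun _ => (1 : ℝ)) ((⇑T.symm)^[i * p] x) - (μ B).toReal| ∂μ)
      + (p : ℝ) * L / R := by
  have hB1 : ∀ y z, |B.indicator (fun _ => (1 : ℝ)) y - B.indicator (fun _ => 1) z| ≤ 1 :=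
    fun y z => by by_cases hy : y ∈ B <;> by_cases hz : z ∈ B <;> simp [hy, hz]
  have key := integral_abs_birkhoffAverage_sub_le (hT.symm T)
    ((integrable_const 1).indicator hB) hB1 (μ B).toReal hR hL p
  simpa only [birkhoffAverage, birkhoffSum, smul_eq_mul, one_div, mul_one,
    ← Function.iterate_mul, mul_comm p] using key

/-- (Block Lemma) For a measure-preserving invertible transformation `T` of a probability
space and a measurable set `B`, for all positive integers `R`, `L`, `p`:
`∫|(1/R)∑_{i<R} χ_B∘T^{-i} − μB| ≤ ∫|(1/L)∑_{i<L} χ_B∘T^{-ip} − μB| + pL/R`. -/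
theorem block_lemma
    {X : Type*} [MeasurableSpace X] (μ : Measure X) [IsProbabilityMeasure μ]
    (T : X ≃ᵐ X) (hT : MeasurePreserving T μ μ)
    (B : Set X) (hB : MeasurableSet B)
    (R L p : ℕ) (hR : 0 < R) (hL : 0 < L) (hp : 0 < p) :
    (∫ x, |(1 / (R : ℝ)) * ∑ i ∈ Finset.range R,
        B.indicator (fun _ => (1 : ℝ)) ((⇑T.symm)^[i] x) - (μ B).toReal| ∂μ) ≤
    (∫ x, |(1 / (L : ℝ)) * ∑ i ∈ Finset.range L,
        B.indicator (fun _ => (1 : ℝ)) ((⇑T.symm)^[i * p] x) - (μ B).toReal| ∂μ)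
      + (p : ℝ) * L / R :=
  block_lemma_general μ T hT B hB R L p hR hL
end

section
/- (Probabilistic Lemma, Ornstein) Let H be a positive integer and X = {i ∈ ℤ : |i| ≤ H/2}. For a positive integer m, let Ω_m = X^m with the uniform probability measure P_m, let x_1,…,x_m denote the coordinates, and for 1 ≤ k < m and ℓ ∈ ℤ set C_{k,ℓ}(ω) = #{i : 1 ≤ i ≤ m − k, x_{i+k}(ω) − x_i(ω) = ℓ}. Then for every α > 1, ε > 0 and positive integer N, there exists m ≥ N such that P_m( for all 1 ≤ k ≤ (1−ε)m and all ℓ ∈ ℤ, C_{k,ℓ} ≤ (α/H)(m − k) ) > 1 − ε. -/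
open Finset
open scoped Classical

/-- The set `X = {i ∈ ℤ : |i| ≤ H/2}` as a finset. -/
noncomputable def spacerSet (H : ℕ) : Finset ℤ :=
  (Finset.Icc (-(H : ℤ)) (H : ℤ)).filter (fun i => 2 * |i| ≤ (H : ℤ))

/-- `Ω_m = X^m`, the finset of all `m`-tuples from `spacerSet H`. -/
noncomputable def omegaSet (H m : ℕ) : Finset (Fin m → ℤ) :=
  Fintype.piFinset (fun _ : Fin m => spacerSet H)

/-- `C_{k,ℓ}(ω) = #{1 ≤ i ≤ m − k : x_{i+k}(ω) − x_i(ω) = ℓ}`. -/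
noncomputable def diffCount (m k : ℕ) (ℓ : ℤ) (ω : Fin m → ℤ) : ℕ :=
  ((Finset.range (m - k)).filter (fun i =>
    if hp : i + k < m ∧ i < m then ω ⟨i + k, hp.1⟩ - ω ⟨i, hp.2⟩ = ℓ else False)).card

/-! A Chernoff bound for each pair (k, ℓ), then a union bound. Expanding
`α ^ C_{k,ℓ} = ∏ᵢ (1 + (α - 1) · 1[x_{i+k} - x_i = ℓ])` over sets `T` of positions, the constraints
indexed by `T` determine the coordinates `x_{i+k}`, `i ∈ T`, from the earlier ones, so they hold with
probability at most `|X|^{-|T|}`. Hence `E[α ^ C_{k,ℓ}] ≤ (1 + (α - 1)/|X|)^{m-k} ≤ exp((α - 1)(m - k)/H)`,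
and Markov's inequality at level `α(m - k)/H` gives the tail bound `exp(-c (m - k))` with
`c = (α log α - α + 1)/H > 0`. For `k ≤ (1 - ε)m` this is at most `exp(-c ε m)`, and only the
`(2H + 1)m` pairs with `|ℓ| ≤ H` can fail, so the failure probability is at most
`(2H + 1) m exp(-c ε m) → 0`. -/

lemma spacerSet_eq_Icc (H : ℕ) : spacerSet H = Icc (-((H / 2 : ℕ) : ℤ)) (H / 2 : ℕ) := by
  ext i
  rw [spacerSet, mem_filter, mem_Icc, mem_Icc, abs_eq_max_neg]
  omega

lemma card_spacerSet (H : ℕ) : #(spacerSet H) = 2 * (H / 2) + 1 := by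
  rw [spacerSet_eq_Icc, Int.card_Icc]
  omega

lemma sub_mem_Icc_of_mem_spacerSet {H : ℕ} {x y : ℤ} (hx : x ∈ spacerSet H)
    (hy : y ∈ spacerSet H) : x - y ∈ Icc (-(H : ℤ)) H := by
  rw [spacerSet, mem_filter, mem_Icc, abs_eq_max_neg] at hx hy
  rw [mem_Icc]
  omega

def extendByZero {m : ℕ} (ω : Fin m → ℤ) (j : ℕ) : ℤ := if h : j < m then ω ⟨j, h⟩ else 0

@[simp]
lemma extendByZero_coe {m : ℕ} (ω : Fin m → ℤ) (j : Fin m) : extendByZero ω j = ω j := by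
  simp [extendByZero]

lemma diffCount_eq_card_filter (m k : ℕ) (ℓ : ℤ) (ω : Fin m → ℤ) :
    diffCount m k ℓ ω =
      #{i ∈ range (m - k) | extendByZero ω (i + k) = extendByZero ω i + ℓ} := by
  unfold diffCount
  congr 1
  refine filter_congr fun i hi => ?_
  have hlt : i + k < m ∧ i < m := by rw [mem_range] at hi; omega
  simp [extendByZero, hlt, sub_eq_iff_eq_add']

lemma mem_Icc_of_diffCount_ne_zero {H m k : ℕ} {ℓ : ℤ} {ω : Fin m → ℤ}
    (hω : ω ∈ omegaSet H m) (h : diffCount m k ℓ ω ≠ 0) : ℓ ∈ Icc (-(H : ℤ)) H := by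
  obtain ⟨i, hi⟩ := card_ne_zero.mp (diffCount_eq_card_filter m k ℓ ω ▸ h)
  rw [mem_filter, mem_range] at hi
  have hmem : ∀ j, ω j ∈ spacerSet H := Fintype.mem_piFinset.mp hω
  obtain ⟨hik, heq⟩ := hi
  have h₁ : i + k < m := by omega
  have h₂ : i < m := by omega
  have := sub_mem_Icc_of_mem_spacerSet (hmem ⟨i + k, h₁⟩) (hmem ⟨i, h₂⟩)
  simp only [extendByZero, dif_pos h₁, dif_pos h₂] at heq
  rwa [heq, add_sub_cancel_left] at this

lemma card_filter_forall_lag_eq_le (X : Finset ℤ) {m k : ℕ} (hk : 0 < k) (ℓ : ℤ)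
    {t : Finset ℕ} (ht : t ⊆ range (m - k)) :
    #{ω ∈ Fintype.piFinset (fun _ : Fin m => X) |
        ∀ i ∈ t, extendByZero ω (i + k) = extendByZero ω i + ℓ} ≤ #X ^ (m - #t) := by
  set T := t.map (addRightEmbedding k)
  have hT : ∀ j ∈ T, j < m := by
    simp only [T, mem_map, addRightEmbedding_apply]
    rintro _ ⟨i, hi, rfl⟩
    have := mem_range.mp (ht hi)
    omega
  have hcardT : #{j : Fin m | (j : ℕ) ∈ T} = #t := by
    rw [← card_map (addRightEmbedding k), ← card_attachFin T hT]
    congr 1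
    ext j
    simp
  let forget (ω : Fin m → ℤ) (j : Fin m) : ℤ := if (j : ℕ) ∈ T then 0 else ω j
  calc _ ≤ #(Fintype.piFinset fun j : Fin m => if (j : ℕ) ∈ T then {0} else X) := by
        refine card_le_card_of_injOn forget (fun ω hω => ?_) (fun ω hω ω' hω' heq => ?_)
        · obtain ⟨hωX, -⟩ := mem_filter.mp (mem_coe.mp hω)
          rw [mem_coe, Fintype.mem_piFinset]
          intro j
          by_cases hj : (j : ℕ) ∈ T <;> simp [forget, hj, Fintype.mem_piFinset.mp hωX j]
        · obtain ⟨-, hωc⟩ := mem_filter.mp (mem_coe.mp hω)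
          obtain ⟨-, hωc'⟩ := mem_filter.mp (mem_coe.mp hω')
          have key : ∀ n, extendByZero ω n = extendByZero ω' n := by
            intro n
            induction n using Nat.strong_induction_on with
            | _ n ih =>
              by_cases hn : n ∈ T
              · obtain ⟨i, hi, rfl⟩ := mem_map.mp hn
                rw [addRightEmbedding_apply, hωc i hi, hωc' i hi, ih i (by simp; omega)]
              · by_cases hnm : n < m
                · simpa [forget, hn, extendByZero, hnm] using congrFun heq ⟨n, hnm⟩
                · simp [extendByZero, hnm]
          funext j
          simpa using key j
    _ = #X ^ (m - #t) := by
        have := card_filter_add_card_filter_not (s := univ) (fun j : Fin m => (j : ℕ) ∈ T)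
        simp only [Fintype.card_piFinset, apply_ite card, card_singleton, prod_ite, prod_const_one,
          one_mul, prod_const]
        rw [card_univ, Fintype.card_fin, hcardT] at this
        congr 1
        omega

lemma Finset.powerset_filter {ι : Type*} (s : Finset ι) (p : ι → Prop) [DecidablePred p] :
    (s.filter p).powerset = s.powerset.filter fun t => ∀ i ∈ t, p i := by
  ext t
  simp only [mem_powerset, mem_filter, subset_iff]
  exact ⟨fun h => ⟨fun i hi => (h hi).1, fun i hi => (h hi).2⟩, fun h i hi => ⟨h.1 hi, h.2 i hi⟩⟩

lemma Finset.one_add_pow_card_filter {ι R : Type*} [CommSemiring R] (s : Finset ι) (p : ι → Prop)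
    [DecidablePred p] (a : R) :
    (1 + a) ^ #(s.filter p) = ∑ t ∈ s.powerset, if ∀ i ∈ t, p i then a ^ #t else 0 := by
  rw [← sum_filter, ← powerset_filter, add_comm, ← sum_pow_mul_eq_add_pow]
  simp

lemma sum_one_add_pow_diffCount_le (X : Finset ℤ) {m k : ℕ} (hk : 0 < k) (ℓ : ℤ) {a : ℝ}
    (ha : 0 ≤ a) :
    ∑ ω ∈ Fintype.piFinset (fun _ : Fin m => X), (1 + a) ^ diffCount m k ℓ ω
      ≤ (#X : ℝ) ^ (m - (m - k)) * (a + #X) ^ (m - k) := by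
  set Ω := Fintype.piFinset (fun _ : Fin m => X)
  calc ∑ ω ∈ Ω, (1 + a) ^ diffCount m k ℓ ω
      = ∑ t ∈ (range (m - k)).powerset,
          a ^ #t * #{ω ∈ Ω | ∀ i ∈ t, extendByZero ω (i + k) = extendByZero ω i + ℓ} := by
        simp_rw [diffCount_eq_card_filter, one_add_pow_card_filter]
        rw [sum_comm]
        refine sum_congr rfl fun t _ => ?_
        rw [← sum_filter, sum_const, nsmul_eq_mul, mul_comm]
    _ ≤ ∑ t ∈ (range (m - k)).powerset,
          a ^ #t * ((#X : ℝ) ^ (m - (m - k)) * #X ^ (m - k - #t)) := by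
        refine sum_le_sum fun t ht => ?_
        have htm : #t ≤ m - k := by simpa using card_le_card (mem_powerset.mp ht)
        rw [← pow_add, show m - (m - k) + (m - k - #t) = m - #t by omega]
        gcongr
        exact_mod_cast card_filter_forall_lag_eq_le X hk ℓ (mem_powerset.mp ht)
    _ = (#X : ℝ) ^ (m - (m - k)) * (a + #X) ^ (m - k) := by
        have binomial := sum_pow_mul_eq_add_pow a (#X : ℝ) (range (m - k))
        rw [card_range] at binomial
        rw [← binomial, mul_sum]
        exact sum_congr rfl fun t _ => by ring

lemma sub_one_lt_mul_log {α : ℝ} (hα : 1 < α) : α - 1 < α * Real.log α := by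
  have hα₀ : 0 < α := by linarith
  have h := Real.log_lt_sub_one_of_pos (inv_pos.mpr hα₀) (inv_ne_one.mpr hα.ne')
  rw [Real.log_inv] at h
  have := mul_lt_mul_of_pos_left h hα₀
  rw [mul_sub, mul_inv_cancel₀ hα₀.ne'] at this
  linarith

lemma mul_log_sub_add_one_div_pos {α h : ℝ} (hα : 1 < α) (hh : 0 < h) :
    0 < (α * Real.log α - α + 1) / h :=
  div_pos (by linarith [sub_one_lt_mul_log hα]) hh

lemma add_sub_one_le_mul_exp {α h x : ℝ} (hα : 1 ≤ α) (hh : 0 < h) (hx : h ≤ x) :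
    x + (α - 1) ≤ x * Real.exp ((α - 1) / h) := by
  have hratio : α - 1 ≤ x * ((α - 1) / h) := by
    rw [mul_div_assoc', le_div_iff₀ hh]
    nlinarith
  calc x + (α - 1) ≤ x * ((α - 1) / h + 1) := by linarith
    _ ≤ x * Real.exp ((α - 1) / h) := by
        gcongr
        · linarith
        · exact Real.add_one_le_exp _

lemma card_filter_lt_diffCount_le (X : Finset ℤ) {h α : ℝ} (hh : 0 < h) (hX : h ≤ #X)
    (hα : 1 < α) {m k : ℕ} (hk : 0 < k) (hkm : k ≤ m) (ℓ : ℤ) :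
    (#{ω ∈ Fintype.piFinset (fun _ : Fin m => X) | α / h * (m - k) < diffCount m k ℓ ω} : ℝ)
      ≤ #X ^ m * Real.exp (-((α * Real.log α - α + 1) / h * (m - k))) := by
  set Ω := Fintype.piFinset (fun _ : Fin m => X)
  set n : ℝ := m - k
  have hn : ((m - k : ℕ) : ℝ) = n := by push_cast [Nat.cast_sub hkm]; rfl
  have markov : (#{ω ∈ Ω | α / h * n < diffCount m k ℓ ω} : ℝ) * Real.exp (α / h * n * Real.log α)
      ≤ ∑ ω ∈ Ω, α ^ diffCount m k ℓ ω := by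
    calc _ ≤ ∑ ω ∈ Ω with α / h * n < diffCount m k ℓ ω, α ^ diffCount m k ℓ ω := by
          rw [← nsmul_eq_mul]
          refine card_nsmul_le_sum _ _ _ fun ω hω => ?_
          rw [← Real.exp_log (pow_pos (by linarith) _), Real.log_pow]
          exact Real.exp_le_exp.mpr
            (mul_le_mul_of_nonneg_right (mem_filter.mp hω).2.le (Real.log_nonneg hα.le))
      _ ≤ _ := sum_le_sum_of_subset_of_nonneg (filter_subset _ _) fun _ _ _ => by positivity
  have mgf : ∑ ω ∈ Ω, α ^ diffCount m k ℓ ω ≤ #X ^ m * Real.exp ((α - 1) / h * n) := by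
    have := sum_one_add_pow_diffCount_le X (m := m) hk ℓ (sub_nonneg.mpr hα.le)
    rw [add_sub_cancel, Nat.sub_sub_self hkm, add_comm (α - 1)] at this
    calc _ ≤ _ := this
      _ ≤ (#X : ℝ) ^ k * (#X * Real.exp ((α - 1) / h)) ^ (m - k) := by
          gcongr
          exact add_sub_one_le_mul_exp hα.le hh hX
      _ = #X ^ m * Real.exp ((α - 1) / h * n) := by
          rw [mul_pow, ← Real.exp_nat_mul, hn, ← mul_assoc, ← pow_add, Nat.add_sub_cancel' hkm]
          ring_nf
  rw [show -((α * Real.log α - α + 1) / h * n) = (α - 1) / h * n - α / h * n * Real.log α by ring,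
    Real.exp_sub, ← mul_div_assoc, le_div_iff₀ (Real.exp_pos _)]
  exact markov.trans mgf

lemma card_omegaSet (H m : ℕ) : #(omegaSet H m) = #(spacerSet H) ^ m :=
  Fintype.card_piFinset_const _ _

lemma filter_not_forall_diffCount_le_subset {H : ℕ} {α ε : ℝ} (hα : 0 ≤ α) (hε : 0 ≤ ε)
    (m : ℕ) :
    {ω ∈ omegaSet H m | ¬ ∀ k : ℕ, 1 ≤ k → (k : ℝ) ≤ (1 - ε) * m → ∀ ℓ : ℤ,
        (diffCount m k ℓ ω : ℝ) ≤ α / H * ((m : ℝ) - k)} ⊆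
      ({k ∈ Icc 1 m | ((k : ℕ) : ℝ) ≤ (1 - ε) * m} ×ˢ Icc (-(H : ℤ)) H).biUnion fun p =>
        {ω ∈ omegaSet H m | α / H * ((m : ℝ) - p.1) < diffCount m p.1 p.2 ω} := by
  intro ω hω
  simp only [mem_filter, not_forall, not_le] at hω
  obtain ⟨hΩ, k, hk, hkε, ℓ, hC⟩ := hω
  have hkm : (k : ℝ) ≤ m := hkε.trans (by nlinarith)
  have hC₀ : diffCount m k ℓ ω ≠ 0 := by
    intro h₀
    rw [h₀, Nat.cast_zero] at hC
    have : 0 ≤ α / H * ((m : ℝ) - k) := mul_nonneg (by positivity) (by linarith)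
    linarith
  simp only [mem_biUnion, mem_product, mem_filter, mem_Icc]
  exact ⟨(k, ℓ), ⟨⟨⟨hk, by exact_mod_cast hkm⟩, hkε⟩,
    mem_Icc.mp (mem_Icc_of_diffCount_ne_zero hΩ hC₀)⟩, hΩ, hC⟩

lemma card_filter_not_forall_diffCount_le {H : ℕ} (hH : 0 < H) {α ε : ℝ} (hα : 1 < α)
    (hε : 0 < ε) (m : ℕ) :
    (#{ω ∈ omegaSet H m | ¬ ∀ k : ℕ, 1 ≤ k → (k : ℝ) ≤ (1 - ε) * m → ∀ ℓ : ℤ,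
        (diffCount m k ℓ ω : ℝ) ≤ α / H * ((m : ℝ) - k)} : ℝ)
      ≤ (2 * H + 1) * m * Real.exp (-((α * Real.log α - α + 1) / H * ε * m))
          * #(omegaSet H m) := by
  set c := (α * Real.log α - α + 1) / H
  set pairs := {k ∈ Icc 1 m | ((k : ℕ) : ℝ) ≤ (1 - ε) * m} ×ˢ Icc (-(H : ℤ)) H
  have hc : 0 < c := mul_log_sub_add_one_div_pos hα (by exact_mod_cast hH)
  have hpairs : (#pairs : ℝ) ≤ (2 * H + 1) * m := by
    have hlags : #{k ∈ Icc 1 m | ((k : ℕ) : ℝ) ≤ (1 - ε) * m} ≤ m :=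
      (card_filter_le _ _).trans (by simp)
    rw [card_product, Int.card_Icc, Nat.cast_mul, mul_comm]
    gcongr
    norm_cast
    omega
  have hbad : ∀ p ∈ pairs, (#{ω ∈ omegaSet H m | α / H * ((m : ℝ) - p.1) < diffCount m p.1 p.2 ω}
      : ℝ) ≤ Real.exp (-(c * ε * m)) * #(omegaSet H m) := by
    rintro ⟨k, ℓ⟩ hp
    simp only [pairs, mem_product, mem_filter, mem_Icc] at hp
    obtain ⟨⟨⟨hk, hkm⟩, hkε⟩, -⟩ := hp
    have hHX : (H : ℝ) ≤ #(spacerSet H) := by rw [card_spacerSet]; norm_cast; omega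
    calc _ ≤ #(spacerSet H) ^ m * Real.exp (-(c * (m - k))) :=
          card_filter_lt_diffCount_le _ (by exact_mod_cast hH) hHX hα hk hkm ℓ
      _ ≤ Real.exp (-(c * ε * m)) * #(omegaSet H m) := by
          rw [card_omegaSet, mul_comm, Nat.cast_pow]
          refine mul_le_mul_of_nonneg_right (Real.exp_le_exp.mpr ?_) (by positivity)
          nlinarith
  calc _ ≤ (#(pairs.biUnion fun p =>
          {ω ∈ omegaSet H m | α / H * ((m : ℝ) - p.1) < diffCount m p.1 p.2 ω}) : ℝ) := by
        exact Nat.cast_le.mpr (card_le_card (filter_not_forall_diffCount_le_subset (by linarith) hε.le m))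
    _ ≤ ∑ p ∈ pairs,
          (#{ω ∈ omegaSet H m | α / H * ((m : ℝ) - p.1) < diffCount m p.1 p.2 ω} : ℝ) := by
        exact_mod_cast card_biUnion_le
    _ ≤ #pairs * (Real.exp (-(c * ε * m)) * #(omegaSet H m)) := by
        simpa using sum_le_card_nsmul _ _ _ hbad
    _ ≤ (2 * H + 1) * m * Real.exp (-(c * ε * m)) * #(omegaSet H m) := by
        rw [← mul_assoc]
        gcongr

lemma one_sub_lt_card_filter_div_card {ι : Type*} {s : Finset ι} {p : ι → Prop}
    [DecidablePred p] {ε : ℝ} (h : (#{x ∈ s | ¬ p x} : ℝ) < ε * #s) :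
    1 - ε < #{x ∈ s | p x} / #s := by
  have hsplit : (#{x ∈ s | p x} : ℝ) + #{x ∈ s | ¬ p x} = #s := by
    exact_mod_cast card_filter_add_card_filter_not p
  have hs : (0 : ℝ) < #s := by
    by_contra! hs
    rw [le_antisymm hs (Nat.cast_nonneg _), mul_zero] at h
    exact (Nat.cast_nonneg _).not_gt h
  rw [lt_div_iff₀ hs]
  linarith

open Filter Topology in
lemma exists_ge_mul_mul_exp_neg_lt (C : ℝ) {b ε : ℝ} (hb : 0 < b) (hε : 0 < ε) (N : ℕ) :
    ∃ m : ℕ, N ≤ m ∧ C * m * Real.exp (-(b * m)) < ε := by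
  have hlim : Tendsto (fun x : ℝ => C * x * Real.exp (-(b * x))) atTop (𝓝 0) := by
    have := ((Real.tendsto_pow_mul_exp_neg_atTop_nhds_zero 1).comp
      (tendsto_id.const_mul_atTop hb)).const_mul (C / b)
    rw [mul_zero] at this
    refine this.congr fun x => ?_
    simp only [Function.comp_apply, id, pow_one]
    field_simp
  obtain ⟨m, hm, hmN⟩ :=
    (((hlim.comp tendsto_natCast_atTop_atTop).eventually (gt_mem_nhds hε)).and
      (eventually_ge_atTop N)).exists
  exact ⟨m, hmN, hm⟩

theorem ornstein_probabilistic_lemma_general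
    (H : ℕ) (hH : 0 < H) (α : ℝ) (hα : 1 < α) (ε : ℝ) (hε : 0 < ε) (N : ℕ) :
    ∃ m : ℕ, N ≤ m ∧
      (((omegaSet H m).filter (fun ω =>
          ∀ k : ℕ, 1 ≤ k → (k : ℝ) ≤ (1 - ε) * m → ∀ ℓ : ℤ,
            (diffCount m k ℓ ω : ℝ) ≤ α / H * ((m : ℝ) - k))).card : ℝ)
        / ((omegaSet H m).card : ℝ) > 1 - ε := by
  have hc := mul_log_sub_add_one_div_pos hα (by exact_mod_cast hH : (0 : ℝ) < H)
  obtain ⟨m, hmN, hm⟩ := exists_ge_mul_mul_exp_neg_lt (2 * H + 1) (mul_pos hc hε) hε N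
  refine ⟨m, hmN, one_sub_lt_card_filter_div_card ?_⟩
  have hΩ : (0 : ℝ) < #(omegaSet H m) := by
    rw [card_omegaSet, card_spacerSet]
    positivity
  calc _ ≤ _ := card_filter_not_forall_diffCount_le hH hα hε m
    _ < ε * #(omegaSet H m) := by gcongr

/-- (Ornstein's probabilistic lemma) For every `α > 1`, `ε > 0` and `N`, there is `m ≥ N`
such that with uniform probability greater than `1 − ε` on `Ω_m = X^m`, every lag
`1 ≤ k ≤ (1−ε)m` and every `ℓ ∈ ℤ` satisfy `C_{k,ℓ} ≤ (α/H)(m − k)`. -/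
theorem ornstein_probabilistic_lemma
    (H : ℕ) (hH : 0 < H) (α : ℝ) (hα : 1 < α) (ε : ℝ) (hε : 0 < ε) (N : ℕ) (hN : 0 < N) :
    ∃ m : ℕ, N ≤ m ∧
      (((omegaSet H m).filter (fun ω =>
          ∀ k : ℕ, 1 ≤ k → (k : ℝ) ≤ (1 - ε) * m → ∀ ℓ : ℤ,
            (diffCount m k ℓ ω : ℝ) ≤ α / H * ((m : ℝ) - k))).card : ℝ)
        / ((omegaSet H m).card : ℝ) > 1 - ε :=
  ornstein_probabilistic_lemma_general H hH α hα ε hε N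
end
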